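/- arXiv:2007.02411 — 2 statements merged into one kernel-verified Lean document; each statement's English description precedes it below -/
import Mathlib

section
/- For a real random variable ξ with E[max(ξ,0)] < ∞ and α ∈ (0,1), a point η* minimizes g(η) = (1/α) E[max(ξ - η, 0)] + η if and only if F_ξ(η*) - (1-α) ∈ [0, P(ξ = η*)], where F_ξ(t) = P(ξ ≤ t). -/
/-!
Write `h(η) = E[(ξ - η)₊]`. Integrating the pointwise bounds
`(b - a) 1{x ≥ b} ≤ (x - a)₊ - (x - b)₊ ≤ (b - a) 1{x > a}` for `a ≤ b` shows that the convex
function `h` has right slope `-P(ξ > η)` and left slope `-P(ξ ≥ η)`, the limits being taken by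
continuity of `P` along monotone sequences of sets. Hence `η*` minimizes `h / α + η` exactly when
`P(ξ > η*) ≤ α ≤ P(ξ ≥ η*)`; rewrite with `P(ξ > η*) = 1 - F_ξ(η*)` and
`P(ξ ≥ η*) = 1 - F_ξ(η*) + P(ξ = η*)`.
-/

open MeasureTheory Set

lemma inv_mul_add_le_inv_mul_add_iff {α : ℝ} (hα : 0 < α) (x y s t : ℝ) :
    α⁻¹ * x + s ≤ α⁻¹ * y + t ↔ x - y ≤ α * (t - s) := by
  rw [← mul_le_mul_iff_of_pos_left hα, mul_add, mul_add, ← mul_assoc, ← mul_assoc,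
    mul_inv_cancel₀ hα.ne', one_mul, one_mul, mul_sub]
  constructor <;> intro h <;> linarith

lemma indicator_Ici_le_posPart_sub_sub_posPart_sub {a b : ℝ} (hab : a ≤ b) (x : ℝ) :
    (Ici b).indicator (fun _ => b - a) x ≤ max (x - a) 0 - max (x - b) 0 := by
  by_cases hx : b ≤ x
  · rw [indicator_of_mem (mem_Ici.2 hx), max_eq_left (by linarith), max_eq_left (by linarith)]
    linarith
  · rw [indicator_of_notMem (notMem_Ici.2 (not_le.1 hx)), max_eq_right (by linarith : x - b ≤ 0)]
    simp

lemma posPart_sub_sub_posPart_sub_le_indicator_Ioi {a b : ℝ} (hab : a ≤ b) (x : ℝ) :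
    max (x - a) 0 - max (x - b) 0 ≤ (Ioi a).indicator (fun _ => b - a) x := by
  by_cases hx : a < x
  · rw [indicator_of_mem (mem_Ioi.2 hx)]
    rcases le_total x b with hxb | hxb
    · rw [max_eq_left (by linarith), max_eq_right (by linarith : x - b ≤ 0)]
      linarith
    · rw [max_eq_left (by linarith), max_eq_left (by linarith)]
      linarith
  · rw [not_lt] at hx
    rw [indicator_of_notMem (notMem_Ioi.2 hx), max_eq_right (by linarith),
      max_eq_right (by linarith)]
    simp

section FiniteMeasure

variable {Ω : Type*} [MeasurableSpace Ω] {μ : Measure Ω} [IsFiniteMeasure μ] {ξ : Ω → ℝ}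

lemma integrable_posPart_sub (hξ : Measurable ξ) (hint : Integrable (fun ω => max (ξ ω) 0) μ)
    (η : ℝ) : Integrable (fun ω => max (ξ ω - η) 0) μ := by
  refine (hint.add (integrable_const |η|)).mono'
    ((hξ.sub_const η).max measurable_const).aestronglyMeasurable (ae_of_all _ fun ω => ?_)
  rw [Pi.add_apply, Real.norm_of_nonneg (le_max_right _ _)]
  exact max_le (by linarith [le_max_left (ξ ω) 0, neg_abs_le η])
    (add_nonneg (le_max_right _ _) (abs_nonneg η))

lemma sub_mul_measureReal_le_integral_posPart_sub_sub (hξ : Measurable ξ)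
    (hint : Integrable (fun ω => max (ξ ω) 0) μ) {a b : ℝ} (hab : a ≤ b) :
    (b - a) * μ.real {ω | b ≤ ξ ω}
      ≤ ∫ ω, max (ξ ω - a) 0 ∂μ - ∫ ω, max (ξ ω - b) 0 ∂μ := by
  have hs : MeasurableSet {ω | b ≤ ξ ω} := measurableSet_le measurable_const hξ
  rw [mul_comm, ← smul_eq_mul, ← integral_indicator_const _ hs,
    ← integral_sub (integrable_posPart_sub hξ hint a) (integrable_posPart_sub hξ hint b)]
  exact integral_mono ((integrable_const _).indicator hs)
    ((integrable_posPart_sub hξ hint a).sub (integrable_posPart_sub hξ hint b))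
    fun ω => indicator_Ici_le_posPart_sub_sub_posPart_sub hab (ξ ω)

lemma integral_posPart_sub_sub_le_sub_mul_measureReal (hξ : Measurable ξ)
    (hint : Integrable (fun ω => max (ξ ω) 0) μ) {a b : ℝ} (hab : a ≤ b) :
    ∫ ω, max (ξ ω - a) 0 ∂μ - ∫ ω, max (ξ ω - b) 0 ∂μ
      ≤ (b - a) * μ.real {ω | a < ξ ω} := by
  have hs : MeasurableSet {ω | a < ξ ω} := measurableSet_lt measurable_const hξ
  rw [mul_comm, ← smul_eq_mul, ← integral_indicator_const _ hs,
    ← integral_sub (integrable_posPart_sub hξ hint a) (integrable_posPart_sub hξ hint b)]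
  exact integral_mono ((integrable_posPart_sub hξ hint a).sub (integrable_posPart_sub hξ hint b))
    ((integrable_const _).indicator hs)
    fun ω => posPart_sub_sub_posPart_sub_le_indicator_Ioi hab (ξ ω)

lemma measureReal_lt_le_of_forall_pos {c m : ℝ}
    (h : ∀ ε > 0, μ.real {ω | c + ε ≤ ξ ω} ≤ m) : μ.real {ω | c < ξ ω} ≤ m := by
  have hmono : Monotone fun n : ℕ => {ω | c + 1 / ((n : ℝ) + 1) ≤ ξ ω} :=
    fun _ _ hmn _ hω => ((add_le_add_iff_left c).2 (Nat.one_div_le_one_div hmn)).trans hω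
  have hunion : ⋃ n : ℕ, {ω | c + 1 / ((n : ℝ) + 1) ≤ ξ ω} = {ω | c < ξ ω} := by
    ext ω
    simp only [mem_iUnion, mem_ofPred_eq]
    refine ⟨fun ⟨n, hn⟩ => (lt_add_of_pos_right c Nat.one_div_pos_of_nat).trans_le hn,
      fun hω => ?_⟩
    obtain ⟨n, hn⟩ := exists_nat_one_div_lt (sub_pos.2 hω)
    exact ⟨n, by linarith⟩
  have hlim := (ENNReal.tendsto_toReal (measure_ne_top μ _)).comp
    (tendsto_measure_iUnion_atTop hmono)
  rw [hunion] at hlim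
  exact le_of_tendsto' hlim fun n => h _ Nat.one_div_pos_of_nat

lemma le_measureReal_le_of_forall_pos (hξ : Measurable ξ) {c m : ℝ}
    (h : ∀ ε > 0, m ≤ μ.real {ω | c - ε < ξ ω}) : m ≤ μ.real {ω | c ≤ ξ ω} := by
  have hanti : Antitone fun n : ℕ => {ω | c - 1 / ((n : ℝ) + 1) < ξ ω} :=
    fun _ _ hmn _ hω => (sub_le_sub_left (Nat.one_div_le_one_div hmn) c).trans_lt hω
  have hinter : ⋂ n : ℕ, {ω | c - 1 / ((n : ℝ) + 1) < ξ ω} = {ω | c ≤ ξ ω} := by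
    ext ω
    simp only [mem_iInter, mem_ofPred_eq]
    refine ⟨fun hω => le_of_forall_pos_lt_add fun ε hε => ?_,
      fun hω n => (sub_lt_self c Nat.one_div_pos_of_nat).trans_le hω⟩
    obtain ⟨n, hn⟩ := exists_nat_one_div_lt hε
    linarith [hω n]
  have hlim := (ENNReal.tendsto_toReal (measure_ne_top μ _)).comp
    (tendsto_measure_iInter_atTop
      (fun _ => (measurableSet_lt measurable_const hξ).nullMeasurableSet) hanti
      ⟨0, measure_ne_top μ _⟩)
  rw [hinter] at hlim
  exact ge_of_tendsto' hlim fun n => h _ Nat.one_div_pos_of_nat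

lemma measureReal_le_eq_add (hξ : Measurable ξ) (c : ℝ) :
    μ.real {ω | ξ ω ≤ c} = μ.real {ω | ξ ω < c} + μ.real {ω | ξ ω = c} := by
  rw [← measureReal_union (disjoint_left.2 fun _ hlt heq => hlt.ne heq)
    (measurableSet_eq_fun hξ measurable_const)]
  simp only [← ofPred_or, le_iff_lt_or_eq]

theorem forall_integral_posPart_sub_le_iff (hξ : Measurable ξ)
    (hint : Integrable (fun ω => max (ξ ω) 0) μ) (α ηs : ℝ) :
    (∀ η, ∫ ω, max (ξ ω - ηs) 0 ∂μ - ∫ ω, max (ξ ω - η) 0 ∂μ ≤ α * (η - ηs))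
      ↔ μ.real {ω | ηs < ξ ω} ≤ α ∧ α ≤ μ.real {ω | ηs ≤ ξ ω} := by
  constructor
  · intro hmin
    constructor
    · refine measureReal_lt_le_of_forall_pos fun ε hε => le_of_mul_le_mul_left ?_ hε
      have hslope := sub_mul_measureReal_le_integral_posPart_sub_sub hξ hint
        (le_add_of_nonneg_right hε.le : ηs ≤ ηs + ε)
      have hstep := hmin (ηs + ε)
      rw [add_sub_cancel_left] at hslope hstep
      linarith
    · refine le_measureReal_le_of_forall_pos hξ fun ε hε => le_of_mul_le_mul_left ?_ hε
      have hslope := integral_posPart_sub_sub_le_sub_mul_measureReal hξ hint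
        (sub_le_self ηs hε.le : ηs - ε ≤ ηs)
      have hstep := hmin (ηs - ε)
      rw [sub_sub_cancel] at hslope
      rw [sub_sub_cancel_left, mul_neg] at hstep
      linarith
  · rintro ⟨hgt, hge⟩ η
    rcases le_total η ηs with hη | hη
    · have hslope := sub_mul_measureReal_le_integral_posPart_sub_sub hξ hint hη
      linarith [mul_le_mul_of_nonneg_left hge (sub_nonneg.2 hη)]
    · have hslope := integral_posPart_sub_sub_le_sub_mul_measureReal hξ hint hη
      linarith [mul_le_mul_of_nonneg_left hgt (sub_nonneg.2 hη)]

end FiniteMeasure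

section Probability

variable {Ω : Type*} [MeasurableSpace Ω] {P : Measure Ω} [IsProbabilityMeasure P] {ξ : Ω → ℝ}

lemma probReal_lt_eq_one_sub (hξ : Measurable ξ) (c : ℝ) :
    P.real {ω | c < ξ ω} = 1 - P.real {ω | ξ ω ≤ c} := by
  rw [← probReal_compl_eq_one_sub (measurableSet_le hξ measurable_const), compl_ofPred]
  simp only [not_le]

lemma probReal_le_eq_one_sub (hξ : Measurable ξ) (c : ℝ) :
    P.real {ω | c ≤ ξ ω} = 1 - P.real {ω | ξ ω < c} := by
  rw [← probReal_compl_eq_one_sub (measurableSet_lt hξ measurable_const), compl_ofPred]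
  simp only [not_lt]

end Probability

/-- First-order optimality condition for the CVaR dual objective:
`η*` minimizes `g(η) = (1/α) E[(ξ-η)₊] + η` iff
`F_ξ(η*) - (1-α) ∈ [0, P(ξ = η*)]`. -/
theorem stmt2
    {Ω : Type*} [MeasurableSpace Ω] (P : Measure Ω) [IsProbabilityMeasure P]
    (ξ : Ω → ℝ) (hmeas : Measurable ξ)
    (hint : Integrable (fun ω => max (ξ ω) 0) P)
    (α : ℝ) (hα : α ∈ Set.Ioo (0:ℝ) 1)
    (ηs : ℝ) :
    (∀ η : ℝ,
        α⁻¹ * ∫ ω, max (ξ ω - ηs) 0 ∂P + ηs ≤ α⁻¹ * ∫ ω, max (ξ ω - η) 0 ∂P + η)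
      ↔ (0 ≤ (P {ω | ξ ω ≤ ηs}).toReal - (1 - α) ∧
         (P {ω | ξ ω ≤ ηs}).toReal - (1 - α) ≤ (P {ω | ξ ω = ηs}).toReal) := by
  simp only [inv_mul_add_le_inv_mul_add_iff hα.1, forall_integral_posPart_sub_le_iff hmeas hint,
    probReal_lt_eq_one_sub hmeas, probReal_le_eq_one_sub hmeas, ← measureReal_def,
    measureReal_le_eq_add hmeas]
  constructor <;> rintro ⟨h₁, h₂⟩ <;> constructor <;> linarith
end

section
/- Let ξ have CDF F differentiable at its (1-α)-quantile q with positive derivative f(q) > 0 and P(ξ = q) = 0, α ∈ (0,1). Let Δ : Ω → ℝ be bounded (‖Δ‖_∞ < ∞, E[Δ²] < ∞). Then the map t ↦ inf_η {(1/α)E[max(ξ + tΔ - η, 0)] + η} is differentiable at t = 0 with derivative (1/α)E[Δ · 1{ξ ≥ q}]. -/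
/-!
Write `φ(t, η) = α⁻¹ E[(ξ + tΔ - η)₊] + η`, so that the function to differentiate is
`G(t) = inf_η φ(t, η)`. Since `P(ξ > q) ≤ α ≤ P(ξ ≥ q)`, the quantile `q` minimises `φ(0, ·)`;
hence `G ≤ φ(·, q)` with equality at `0`. Joint convexity of `φ` makes `G` midpoint convex,
`2 G(0) ≤ G(t) + G(-t)`, which gives the matching lower bound, so `G` inherits the derivative of
`φ(·, q)` at `0`. That derivative is `α⁻¹ E[Δ 1{ξ ≥ q}]`: the hinge `(ξ + tΔ - q)₊ - (ξ - q)₊`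
equals `tΔ 1{ξ ≥ q}` outside the band `|ξ - q| ≤ |t| ‖Δ‖_∞`, where it is `O(t)`, and the
probability of the band tends to `P(ξ = q) = 0`.
-/

open MeasureTheory Filter Set Topology Asymptotics ProbabilityTheory

theorem StieltjesFunction.leftLim_le_and_le_of_isGLB (f : StieltjesFunction ℝ) {β q : ℝ}
    (hq : IsGLB {t | β ≤ f t} q) : Function.leftLim f q ≤ β ∧ β ≤ f q := by
  constructor
  · refine le_of_tendsto (f.mono.tendsto_leftLim q) (eventually_nhdsWithin_of_forall fun s hs => ?_)
    by_contra! h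
    exact (not_le.2 (mem_Iio.1 hs)) (hq.1 h.le)
  · refine ge_of_tendsto ((f.right_continuous q).mono Ioi_subset_Ici_self)
      (eventually_nhdsWithin_of_forall fun s hs => ?_)
    obtain ⟨r, hr, hrs⟩ := (isGLB_lt_iff hq).1 (mem_Ioi.1 hs)
    exact hr.trans (f.mono hrs.le)

namespace ProbabilityTheory

variable {μ : Measure ℝ}

theorem isGLB_cdf_ge {β : ℝ} (hβ : β ∈ Ioo 0 1) :
    IsGLB {t | β ≤ cdf μ t} (sInf {t | β ≤ cdf μ t}) := by
  refine isGLB_csInf ?_ ?_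
  · exact ((tendsto_cdf_atTop μ).eventually_const_le hβ.2).exists
  · obtain ⟨t, ht⟩ := ((tendsto_cdf_atBot μ).eventually_lt_const hβ.1).exists
    exact ⟨t, fun s hs => le_of_lt <| (monotone_cdf μ).reflect_lt (ht.trans_le hs)⟩

variable [IsProbabilityMeasure μ]

theorem measureReal_Ioi_eq_one_sub_cdf (x : ℝ) : μ.real (Ioi x) = 1 - cdf μ x := by
  have h := (cdf μ).measure_Ioi (tendsto_cdf_atTop μ) x
  rw [measure_cdf] at h
  rw [measureReal_def, h, ENNReal.toReal_ofReal (sub_nonneg.2 (cdf_le_one μ x))]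

theorem measureReal_Ici_eq_one_sub_leftLim_cdf (x : ℝ) :
    μ.real (Ici x) = 1 - Function.leftLim (cdf μ) x := by
  have h := (cdf μ).measure_Ici (tendsto_cdf_atTop μ) x
  rw [measure_cdf] at h
  rw [measureReal_def, h, ENNReal.toReal_ofReal (sub_nonneg.2
    (((monotone_cdf μ).leftLim_le le_rfl).trans (cdf_le_one μ x)))]

end ProbabilityTheory

theorem hasDerivAt_of_le_of_two_mul_le {g h : ℝ → ℝ} {x c : ℝ} (hh : HasDerivAt h c x)
    (hle : ∀ y, g y ≤ h y) (hx : g x = h x) (hmid : ∀ t, 2 * g x ≤ g (x + t) + g (x - t)) :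
    HasDerivAt g c x := by
  rw [hasDerivAt_iff_isLittleO_nhds_zero] at hh ⊢
  set e := fun t => h (x + t) - h x - t • c
  have he_neg : (fun t => e (-t)) =o[𝓝 0] fun t => t := by
    simpa [Function.comp_def] using
      (hh.comp_tendsto (continuous_neg.tendsto' 0 0 neg_zero)).neg_right
  refine IsBigO.trans_isLittleO (isBigO_of_le _ fun t => ?_) (hh.norm_left.add he_neg.norm_left)
  have hup : g (x + t) - g x - t • c ≤ e t := by
    simp only [e]; linarith [hle (x + t)]
  have hlow : -e (-t) ≤ g (x + t) - g x - t • c := by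
    simp only [e, smul_eq_mul, ← sub_eq_add_neg]; linarith [hle (x - t), hmid t]
  rw [Real.norm_eq_abs, Real.norm_of_nonneg (by positivity), Real.norm_eq_abs, Real.norm_eq_abs]
  exact abs_le.2 ⟨by linarith [le_abs_self (e (-t)), abs_nonneg (e t)],
    by linarith [le_abs_self (e t), abs_nonneg (e (-t))]⟩

theorem abs_mul_le_abs_mul_of_abs_le {a b M : ℝ} (hb : |b| ≤ M) : |a * b| ≤ |a| * M :=
  (abs_mul a b).trans_le (mul_le_mul_of_nonneg_left hb (abs_nonneg a))

theorem abs_max_add_sub_max_sub_ite_le {x y q b : ℝ} (hy : |y| ≤ b) :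
    |max (x + y - q) 0 - max (x - q) 0 - (if q ≤ x then y else 0)| ≤
      if |x - q| ≤ b then 2 * b else 0 := by
  obtain ⟨hyl, hyu⟩ := abs_le.1 hy
  split_ifs with hqx hband hband
  · have := abs_max_sub_max_le_abs (x + y - q) (x - q) 0
    rw [show x + y - q - (x - q) = y by ring] at this
    calc _ ≤ |max (x + y - q) 0 - max (x - q) 0| + |y| := abs_sub _ _
      _ ≤ 2 * b := by linarith
  · rw [abs_le, not_and_or] at hband
    rw [max_eq_left (by rcases hband with h | h <;> linarith), max_eq_left (by linarith)]
    simp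
  · rw [max_eq_right (by linarith : x - q ≤ 0), sub_zero, sub_zero,
      abs_of_nonneg (le_max_right _ _)]
    exact max_le (by linarith) (by linarith)
  · rw [abs_le, not_and_or] at hband
    rw [max_eq_right (by rcases hband with h | h <;> linarith), max_eq_right (by linarith)]
    simp

section

variable {Ω : Type*} [MeasurableSpace Ω] {P : Measure Ω} {X Y Z ξ Δ : Ω → ℝ} {α q : ℝ}

theorem integrable_max_zero_of_le_add_const [IsFiniteMeasure P] {C : ℝ}
    (hX : Integrable (fun ω => max (X ω) 0) P) (hY : AEStronglyMeasurable Y P)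
    (hYX : ∀ ω, Y ω ≤ X ω + C) : Integrable (fun ω => max (Y ω) 0) P := by
  refine (hX.add (integrable_const |C|)).mono' (hY.sup aestronglyMeasurable_const)
    (Eventually.of_forall fun ω => ?_)
  rw [Real.norm_of_nonneg (le_max_right _ _)]
  show max (Y ω) 0 ≤ max (X ω) 0 + |C|
  exact max_le (by linarith [hYX ω, le_max_left (X ω) 0, le_abs_self C]) (by positivity)

theorem integral_add_mul_measureReal_le [IsFiniteMeasure P] {f g : Ω → ℝ} {S : Set Ω} {a : ℝ}
    (hS : MeasurableSet S) (hf : Integrable f P) (hg : Integrable g P)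
    (h : ∀ ω, g ω + S.indicator (fun _ => a) ω ≤ f ω) :
    ∫ ω, g ω ∂P + a * P.real S ≤ ∫ ω, f ω ∂P := by
  rw [mul_comm, ← smul_eq_mul, ← integral_indicator_const a hS,
    ← integral_add hg ((integrable_const a).indicator hS)]
  exact integral_mono (hg.add ((integrable_const a).indicator hS)) hf h

theorem measureReal_lt_le_and_le_measureReal_le_of_eq_sInf [IsProbabilityMeasure P]
    (hξ : Measurable ξ) (hα : α ∈ Ioo 0 1)
    (hq : q = sInf {t | 1 - α ≤ P.real {ω | ξ ω ≤ t}}) :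
    P.real {ω | q < ξ ω} ≤ α ∧ α ≤ P.real {ω | q ≤ ξ ω} := by
  set μ := P.map ξ
  have : IsProbabilityMeasure μ := Measure.isProbabilityMeasure_map hξ.aemeasurable
  have hμ : ∀ s, MeasurableSet s → P.real (ξ ⁻¹' s) = μ.real s := fun s hs =>
    (map_measureReal_apply hξ hs).symm
  have hF : ∀ t, P.real {ω | ξ ω ≤ t} = cdf μ t := fun t => by
    rw [cdf_eq_real, ← hμ _ measurableSet_Iic]; rfl
  simp only [hF] at hq
  obtain ⟨hleft, hright⟩ := (cdf μ).leftLim_le_and_le_of_isGLB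
    (hq ▸ isGLB_cdf_ge (μ := μ) ⟨by linarith [hα.2], by linarith [hα.1]⟩)
  have hIoi : P.real {ω | q < ξ ω} = 1 - cdf μ q := by
    rw [← measureReal_Ioi_eq_one_sub_cdf]; exact hμ _ measurableSet_Ioi
  have hIci : P.real {ω | q ≤ ξ ω} = 1 - Function.leftLim (cdf μ) q := by
    rw [← measureReal_Ici_eq_one_sub_leftLim_cdf]; exact hμ _ measurableSet_Ici
  constructor <;> linarith

theorem tendsto_measureReal_abs_sub_le [IsFiniteMeasure P] (hξ : Measurable ξ)
    (hatom : P {ω | ξ ω = q} = 0) :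
    Tendsto (fun s => P.real {ω | |ξ ω - q| ≤ s}) (𝓝[≥] 0) (𝓝 0) := by
  have hinter : ⋂ r > (0 : ℝ), {ω | |ξ ω - q| ≤ r} = {ω | ξ ω = q} := by
    ext ω
    simp only [mem_iInter, mem_ofPred_eq]
    refine ⟨fun h => ?_, fun h r hr => by rw [h, sub_self, abs_zero]; exact hr.le⟩
    exact sub_eq_zero.1 (abs_nonpos_iff.1 (le_of_forall_gt_imp_ge_of_dense h))
  have hgt := tendsto_measure_biInter_gt (μ := P) (s := fun s => {ω | |ξ ω - q| ≤ s}) (a := 0)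
    (fun r _ => (measurableSet_le (by fun_prop) measurable_const).nullMeasurableSet)
    (fun _ _ _ hij _ h => le_trans h hij) ⟨1, one_pos, measure_ne_top _ _⟩
  rw [hinter, hatom] at hgt
  have hzero : P {ω | |ξ ω - q| ≤ 0} = 0 := by
    simpa [abs_nonpos_iff, sub_eq_zero] using hatom
  have := (ENNReal.tendsto_toReal ENNReal.zero_ne_top).comp
    (tendsto_sup.2 ⟨hzero ▸ tendsto_pure_nhds (fun s => P {ω | |ξ ω - q| ≤ s}) 0, hgt⟩)
  rwa [← nhdsWithin_insert, Ioi_insert, ENNReal.toReal_zero] at this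

theorem integrable_max_add_mul_sub [IsFiniteMeasure P] {M : ℝ} (hξ : Measurable ξ)
    (hΔ : Measurable Δ) (hint : Integrable (fun ω => max (ξ ω) 0) P) (hM : ∀ ω, |Δ ω| ≤ M)
    (t η : ℝ) : Integrable (fun ω => max (ξ ω + t * Δ ω - η) 0) P :=
  integrable_max_zero_of_le_add_const (C := |t| * M - η) hint (by fun_prop) fun ω => by
    linarith [le_abs_self (t * Δ ω), abs_mul_le_abs_mul_of_abs_le (a := t) (hM ω)]

theorem abs_integral_max_add_mul_sub_sub_le [IsFiniteMeasure P] {M : ℝ} (hξ : Measurable ξ)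
    (hΔ : Measurable Δ) (hint : Integrable (fun ω => max (ξ ω) 0) P) (hM : ∀ ω, |Δ ω| ≤ M)
    (t : ℝ) :
    |∫ ω, max (ξ ω + t * Δ ω - q) 0 ∂P - ∫ ω, max (ξ ω - q) 0 ∂P
        - t * ∫ ω in {ω | q ≤ ξ ω}, Δ ω ∂P|
      ≤ 2 * (|t| * M) * P.real {ω | |ξ ω - q| ≤ |t| * M} := by
  have hS : MeasurableSet {ω | q ≤ ξ ω} := measurableSet_le measurable_const hξ
  have hB : MeasurableSet {ω | |ξ ω - q| ≤ |t| * M} :=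
    measurableSet_le (by fun_prop) measurable_const
  have hΔint : Integrable Δ P :=
    (integrable_const M).mono' hΔ.aestronglyMeasurable (Eventually.of_forall hM)
  have h0 : Integrable (fun ω => max (ξ ω - q) 0) P := by
    simpa using integrable_max_add_mul_sub hξ hΔ hint hM 0 q
  have h1 : Integrable (fun ω => max (ξ ω + t * Δ ω - q) 0 - max (ξ ω - q) 0) P :=
    (integrable_max_add_mul_sub hξ hΔ hint hM t q).sub h0
  rw [← integral_const_mul, ← integral_indicator hS, ← integral_sub
    (integrable_max_add_mul_sub hξ hΔ hint hM t q) h0,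
    ← integral_sub h1 ((hΔint.const_mul t).indicator hS),
    mul_comm, ← smul_eq_mul, ← integral_indicator_const _ hB, ← Real.norm_eq_abs]
  refine norm_integral_le_of_norm_le ((integrable_const _).indicator hB)
    (Eventually.of_forall fun ω => ?_)
  have := abs_max_add_sub_max_sub_ite_le (x := ξ ω) (q := q)
    (abs_mul_le_abs_mul_of_abs_le (a := t) (hM ω))
  simpa only [indicator_apply, mem_ofPred_eq, Real.norm_eq_abs] using this

theorem hasDerivAt_integral_max_add_mul_sub [IsFiniteMeasure P] {M : ℝ} (hξ : Measurable ξ)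
    (hΔ : Measurable Δ) (hint : Integrable (fun ω => max (ξ ω) 0) P) (hM : ∀ ω, |Δ ω| ≤ M)
    (hatom : P {ω | ξ ω = q} = 0) :
    HasDerivAt (fun t => ∫ ω, max (ξ ω + t * Δ ω - q) 0 ∂P) (∫ ω in {ω | q ≤ ξ ω}, Δ ω ∂P) 0 := by
  -- `M` may be negative (vacuously, when `Ω` is empty), but the band radius must not be.
  set K := max M 0
  have hK : ∀ ω, |Δ ω| ≤ K := fun ω => (hM ω).trans (le_max_left _ _)
  have hband : Tendsto (fun t => P.real {ω | |ξ ω - q| ≤ |t| * K}) (𝓝 0) (𝓝 0) := by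
    refine (tendsto_measureReal_abs_sub_le hξ hatom).comp (tendsto_nhdsWithin_iff.2
      ⟨?_, Eventually.of_forall fun t => mem_Ici.2 (by positivity)⟩)
    simpa using (continuous_abs.tendsto (0 : ℝ)).mul_const K
  have hr : (fun t => 2 * K * P.real {ω | |ξ ω - q| ≤ |t| * K} * t) =o[𝓝 0] fun t => t := by
    simpa using ((isLittleO_one_iff ℝ).2 (by simpa using hband.const_mul (2 * K))).mul_isBigO
      (isBigO_refl (fun t : ℝ => t) (𝓝 0))
  rw [hasDerivAt_iff_isLittleO_nhds_zero]
  refine IsBigO.trans_isLittleO (isBigO_of_le _ fun t => ?_) hr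
  simp only [zero_add, zero_mul, add_zero, smul_eq_mul, Real.norm_eq_abs]
  refine (abs_integral_max_add_mul_sub_sub_le hξ hΔ hint hK t).trans (le_of_eq ?_)
  rw [abs_mul, abs_of_nonneg (by positivity : 0 ≤ 2 * K * P.real {ω | |ξ ω - q| ≤ |t| * K})]
  ring

noncomputable def cvarObjective (P : Measure Ω) (α : ℝ) (X : Ω → ℝ) (η : ℝ) : ℝ :=
  α⁻¹ * ∫ ω, max (X ω - η) 0 ∂P + η

noncomputable def cvar (P : Measure Ω) (α : ℝ) (X : Ω → ℝ) : ℝ :=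
  ⨅ η, cvarObjective P α X η

theorem le_cvarObjective [IsFiniteMeasure P] {c : ℝ} (hX : Measurable X) (hα : 0 < α)
    (hint : ∀ η, Integrable (fun ω => max (X ω - η) 0) P)
    (hc : α ≤ P.real {ω | c ≤ X ω}) (η : ℝ) : c ≤ cvarObjective P α X η := by
  have hpos : 0 ≤ α⁻¹ * ∫ ω, max (X ω - η) 0 ∂P :=
    mul_nonneg (inv_nonneg.2 hα.le) (integral_nonneg fun ω => le_max_right _ _)
  rcases le_or_gt c η with hcη | hηc
  · unfold cvarObjective; linarith
  have key := integral_add_mul_measureReal_le (g := fun _ => 0) (a := c - η)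
    (S := {ω | c ≤ X ω}) (measurableSet_le measurable_const hX) (hint η) (integrable_zero _ _ _)
    fun ω => by by_cases h : c ≤ X ω <;> simp [h]
  rw [integral_zero, zero_add] at key
  have : α⁻¹ * ((c - η) * α) ≤ α⁻¹ * ∫ ω, max (X ω - η) 0 ∂P :=
    mul_le_mul_of_nonneg_left (by nlinarith) (inv_nonneg.2 hα.le)
  rw [mul_comm (c - η), inv_mul_cancel_left₀ hα.ne'] at this
  unfold cvarObjective; linarith

theorem cvarObjective_le_of_quantile [IsFiniteMeasure P] (hX : Measurable X)
    (hα : 0 < α) (hint : ∀ η, Integrable (fun ω => max (X ω - η) 0) P)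
    (hgt : P.real {ω | q < X ω} ≤ α) (hge : α ≤ P.real {ω | q ≤ X ω}) (η : ℝ) :
    cvarObjective P α X q ≤ cvarObjective P α X η := by
  suffices h : ∫ ω, max (X ω - q) 0 ∂P + α * q ≤ ∫ ω, max (X ω - η) 0 ∂P + α * η by
    have := mul_le_mul_of_nonneg_left h (inv_nonneg.2 hα.le)
    rwa [mul_add, mul_add, inv_mul_cancel_left₀ hα.ne', inv_mul_cancel_left₀ hα.ne'] at this
  have hpt : ∀ S : Set Ω, S ⊆ {ω | q ≤ X ω} → (∀ ω ∉ S, X ω ≤ q ∨ η ≤ q) → ∀ ω,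
      max (X ω - q) 0 + S.indicator (fun _ => q - η) ω ≤ max (X ω - η) 0 := by
    intro S hS hSc ω
    by_cases h : ω ∈ S
    · rw [indicator_of_mem h, max_eq_left (sub_nonneg.2 (hS h))]
      exact le_max_of_le_left (by linarith)
    · rw [indicator_of_notMem h, add_zero]
      rcases hSc ω h with hXq | hηq
      · exact (max_eq_right (by linarith)).trans_le (le_max_right _ _)
      · exact max_le_max (by linarith) le_rfl
  rcases le_total q η with hqη | hηq
  · have key := integral_add_mul_measureReal_le (measurableSet_lt measurable_const hX) (hint η)
      (hint q) (hpt {ω | q < X ω} (fun _ (h : q < X _) => h.le) fun ω h => Or.inl (not_lt.1 h))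
    have := mul_le_mul_of_nonneg_left hgt (sub_nonneg.2 hqη)
    linarith
  · have key := integral_add_mul_measureReal_le (measurableSet_le measurable_const hX) (hint η)
      (hint q) (hpt {ω | q ≤ X ω} subset_rfl fun _ _ => Or.inr hηq)
    have := mul_le_mul_of_nonneg_left hge (sub_nonneg.2 hηq)
    linarith

theorem cvar_eq_cvarObjective (hq : ∀ η, cvarObjective P α X q ≤ cvarObjective P α X η) :
    cvar P α X = cvarObjective P α X q :=
  le_antisymm (ciInf_le ⟨_, forall_mem_range.2 hq⟩ q) (le_ciInf hq)

theorem two_mul_cvar_le (hα : 0 < α) (hX : BddBelow (range (cvarObjective P α X)))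
    (hXint : ∀ η, Integrable (fun ω => max (X ω - η) 0) P)
    (hYint : ∀ η, Integrable (fun ω => max (Y ω - η) 0) P)
    (hZint : ∀ η, Integrable (fun ω => max (Z ω - η) 0) P)
    (hXYZ : ∀ ω, 2 * X ω = Y ω + Z ω) :
    2 * cvar P α X ≤ cvar P α Y + cvar P α Z := by
  have key : ∀ η₁ η₂, 2 * cvar P α X ≤ cvarObjective P α Y η₁ + cvarObjective P α Z η₂ := by
    intro η₁ η₂
    have hI : 2 * ∫ ω, max (X ω - (η₁ + η₂) / 2) 0 ∂P
        ≤ ∫ ω, max (Y ω - η₁) 0 ∂P + ∫ ω, max (Z ω - η₂) 0 ∂P := by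
      rw [← integral_const_mul, ← integral_add (hYint η₁) (hZint η₂)]
      refine integral_mono ((hXint _).const_mul 2) ((hYint η₁).add (hZint η₂)) fun ω => ?_
      dsimp only
      rw [mul_max_of_nonneg _ _ zero_le_two, mul_zero]
      exact max_le (by linarith [hXYZ ω, le_max_left (Y ω - η₁) 0, le_max_left (Z ω - η₂) 0])
        (by positivity)
    have hcvar : cvar P α X ≤ cvarObjective P α X ((η₁ + η₂) / 2) := ciInf_le hX _
    have := mul_le_mul_of_nonneg_left hI (inv_nonneg.2 hα.le)
    simp only [cvarObjective] at hcvar ⊢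
    linarith
  have : ∀ η₂, 2 * cvar P α X - cvarObjective P α Z η₂ ≤ cvar P α Y := fun η₂ =>
    le_ciInf fun η₁ => by linarith [key η₁ η₂]
  have : 2 * cvar P α X - cvar P α Y ≤ cvar P α Z := le_ciInf fun η₂ => by linarith [this η₂]
  linarith

end

theorem stmt17_general
    {Ω : Type*} [MeasurableSpace Ω] (P : Measure Ω) [IsProbabilityMeasure P]
    (ξ Δ : Ω → ℝ) (hξ : Measurable ξ) (hΔ : Measurable Δ)
    (hint : Integrable (fun ω => max (ξ ω) 0) P)
    (MΔ : ℝ) (hMΔ : ∀ ω, |Δ ω| ≤ MΔ)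
    (α : ℝ) (hα : α ∈ Set.Ioo (0:ℝ) 1)
    (q : ℝ) (hq : q = sInf {t : ℝ | 1 - α ≤ (P {ω | ξ ω ≤ t}).toReal})
    (hatom : P {ω | ξ ω = q} = 0) :
    HasDerivAt
      (fun t : ℝ => ⨅ η : ℝ, (α⁻¹ * ∫ ω, max (ξ ω + t * Δ ω - η) 0 ∂P + η))
      (α⁻¹ * ∫ ω in {ω | q ≤ ξ ω}, Δ ω ∂P) 0 := by
  obtain ⟨hgt, hge⟩ := measureReal_lt_le_and_le_measureReal_le_of_eq_sInf hξ hα hq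
  have hInt := integrable_max_add_mul_sub hξ hΔ hint hMΔ
  have hmin : ∀ η, cvarObjective P α ξ q ≤ cvarObjective P α ξ η :=
    cvarObjective_le_of_quantile hξ hα.1 (fun η => by simpa using hInt 0 η) hgt hge
  have hbdd : ∀ t, BddBelow (range (cvarObjective P α fun ω => ξ ω + t * Δ ω)) := fun t =>
    ⟨q - |t| * MΔ, forall_mem_range.2 <| le_cvarObjective (by fun_prop) hα.1 (hInt t) <|
      hge.trans <| measureReal_mono fun ω (h : q ≤ ξ ω) => show q - |t| * MΔ ≤ ξ ω + t * Δ ω by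
        linarith [neg_abs_le (t * Δ ω),
          abs_mul_le_abs_mul_of_abs_le (a := t) (hMΔ ω)]⟩
  refine hasDerivAt_of_le_of_two_mul_le
    (h := fun t => cvarObjective P α (fun ω => ξ ω + t * Δ ω) q)
    (((hasDerivAt_integral_max_add_mul_sub hξ hΔ hint hMΔ hatom).const_mul α⁻¹).add_const q)
    (fun t => ciInf_le (hbdd t) q) ?_
    fun t => two_mul_cvar_le hα.1 (hbdd 0) (hInt 0) (hInt _) (hInt _) fun ω => by ring
  simp only [zero_mul, add_zero]
  exact cvar_eq_cvarObjective hmin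

/-- Gateaux differentiability of the CVaR functional in a bounded direction `Δ`:
the map `t ↦ inf_η {(1/α)E[(ξ + tΔ - η)₊] + η}` is differentiable at `t = 0`
with derivative `(1/α) E[Δ · 1{ξ ≥ q}]`. -/
theorem stmt17
    {Ω : Type*} [MeasurableSpace Ω] (P : Measure Ω) [IsProbabilityMeasure P]
    (ξ Δ : Ω → ℝ) (hξ : Measurable ξ) (hΔ : Measurable Δ)
    (hint : Integrable (fun ω => max (ξ ω) 0) P)
    (MΔ : ℝ) (hMΔ : ∀ ω, |Δ ω| ≤ MΔ)
    (hΔ2 : Integrable (fun ω => (Δ ω) ^ 2) P)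
    (α : ℝ) (hα : α ∈ Set.Ioo (0:ℝ) 1)
    (q : ℝ) (hq : q = sInf {t : ℝ | 1 - α ≤ (P {ω | ξ ω ≤ t}).toReal})
    (d : ℝ) (hd : 0 < d)
    (hderiv : HasDerivAt (fun t => (P {ω | ξ ω ≤ t}).toReal) d q)
    (hatom : P {ω | ξ ω = q} = 0) :
    HasDerivAt
      (fun t : ℝ => ⨅ η : ℝ, (α⁻¹ * ∫ ω, max (ξ ω + t * Δ ω - η) 0 ∂P + η))
      (α⁻¹ * ∫ ω in {ω | q ≤ ξ ω}, Δ ω ∂P) 0 :=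
  stmt17_general P ξ Δ hξ hΔ hint MΔ hMΔ α hα q hq hatom
end
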